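/- Streaming approximation error bound: Let Ẑ be a minimizer over ℝ^{d×(k+1)} of J(Z) = (1/2)‖Y − Z^T X‖_F² + (λ/2)‖Z − ZS‖_F², and let Z̃ = [Ŵ, ŵ] ∈ ℝ^{d×(k+1)} be any matrix. Assume X ∈ ℝ^{d×n} has full row rank with smallest singular value σ₁(X) > 0, each column x_i of X satisfies ‖x_i‖² ≤ Ω, λ > 0, and σ₁(I−S) denotes the smallest singular value of I − S. Then ‖Ẑ − Z̃‖_F ≤ (2/(λ·σ₁(I−S)² + σ₁(X)²)) · (√(nΩ)·‖Y − Z̃^T X‖_F + λ·‖I − S‖_F²·√(‖Ŵ‖_F² + ‖ŵ‖²)). -/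

import Mathlib

open Matrix

/-- Frobenius norm. -/
noncomputable def frob {m n : ℕ} (A : Matrix (Fin m) (Fin n) ℝ) : ℝ :=
  Real.sqrt (∑ i, ∑ j, (A i j) ^ 2)

/-- Squared Frobenius norm. -/
def frobSq {m n : ℕ} (A : Matrix (Fin m) (Fin n) ℝ) : ℝ :=
  ∑ i, ∑ j, (A i j) ^ 2

/-- Smallest singular value of `A ∈ ℝ^{d×n}`: `√(min_{‖v‖=1} ‖Aᵀv‖²)`. -/
noncomputable def sigma1 {d n : ℕ} (A : Matrix (Fin d) (Fin n) ℝ) : ℝ :=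
  Real.sqrt (⨅ v : {v : Fin d → ℝ // ∑ i, (v i) ^ 2 = 1}, ∑ j, (Matrix.vecMul v.1 A j) ^ 2)

/-- The SLL objective `J(Z) = (1/2)‖Y − ZᵀX‖_F² + (λ/2)‖Z − ZS‖_F²`. -/
noncomputable def sllJ {d n k : ℕ} (X : Matrix (Fin d) (Fin n) ℝ)
    (Y : Matrix (Fin (k + 1)) (Fin n) ℝ) (S : Matrix (Fin (k + 1)) (Fin (k + 1)) ℝ)
    (lam : ℝ) (Z : Matrix (Fin d) (Fin (k + 1)) ℝ) : ℝ :=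
  (1 / 2) * frobSq (Y - Zᵀ * X) + (lam / 2) * frobSq (Z - Z * S)

/-!
Write `Ẑ = Z̃ + Δ`. Expanding both terms of `J` around `Z̃` and bounding the cross terms by the
reverse triangle inequality `(‖A‖ - ‖B‖)² ≤ ‖A ± B‖²` (which is Cauchy–Schwarz in disguise),
`J(Ẑ) ≤ J(Z̃)` gives
`‖ΔᵀX‖² + λ‖Δ(I - S)‖² ≤ 2 (‖Y - Z̃ᵀX‖ ‖ΔᵀX‖ + λ ‖Z̃(I - S)‖ ‖Δ(I - S)‖)`.
The smallest singular values bound the left side below by `(λ σ₁(I - S)² + σ₁(X)²) ‖Δ‖²`, and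
submultiplicativity of the Frobenius norm together with `‖X‖_F² ≤ nΩ` bounds the right side
above by twice the bracket of the claim times `‖Δ‖`; dividing by `‖Δ‖` concludes.
-/

open scoped Matrix.Norms.Frobenius

section Frobenius

variable {m n : ℕ}

theorem frob_eq_norm (A : Matrix (Fin m) (Fin n) ℝ) : frob A = ‖A‖ := by
  rw [frob, Matrix.frobenius_norm_def, Real.sqrt_eq_rpow]
  simp only [Real.norm_eq_abs, Real.rpow_two, sq_abs]

theorem frobSq_nonneg (A : Matrix (Fin m) (Fin n) ℝ) : 0 ≤ frobSq A :=
  Finset.sum_nonneg fun _ _ => Finset.sum_nonneg fun _ _ => sq_nonneg _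

theorem frobSq_eq_norm_sq (A : Matrix (Fin m) (Fin n) ℝ) : frobSq A = ‖A‖ ^ 2 := by
  rw [← frob_eq_norm, frob, ← frobSq, Real.sq_sqrt (frobSq_nonneg A)]

theorem frobSq_snoc {k : ℕ} (W : Matrix (Fin m) (Fin k) ℝ) (w : Fin m → ℝ) :
    frobSq (Matrix.of fun r => Fin.snoc (W r) (w r) : Matrix (Fin m) (Fin (k + 1)) ℝ)
      = frobSq W + ∑ i, w i ^ 2 := by
  simp [frobSq, Fin.sum_univ_castSucc, Finset.sum_add_distrib]

theorem norm_le_sqrt_mul_of_forall_col_sq_le (X : Matrix (Fin m) (Fin n) ℝ) {Om : ℝ}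
    (h : ∀ j, ∑ i, X i j ^ 2 ≤ Om) : ‖X‖ ≤ Real.sqrt (n * Om) := by
  rw [← frob_eq_norm, frob, Finset.sum_comm]
  gcongr
  calc ∑ j, ∑ i, X i j ^ 2 ≤ ∑ _j : Fin n, Om := Finset.sum_le_sum fun j _ => h j
    _ = n * Om := by simp

end Frobenius

theorem sq_sigma1_mul_sum_sq_le {d n : ℕ} (M : Matrix (Fin d) (Fin n) ℝ) (v : Fin d → ℝ) :
    sigma1 M ^ 2 * ∑ i, v i ^ 2 ≤ ∑ j, vecMul v M j ^ 2 := by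
  have hnonneg : ∀ w : Fin d → ℝ, 0 ≤ ∑ j, vecMul w M j ^ 2 :=
    fun _ => Finset.sum_nonneg fun _ _ => sq_nonneg _
  obtain hc | hc := (Finset.sum_nonneg fun i _ => sq_nonneg (v i) : 0 ≤ ∑ i, v i ^ 2).eq_or_lt
  · rw [← hc, mul_zero]
    exact hnonneg v
  -- the infimum defining `sigma1 M` is bounded by its value at the unit vector `v / ‖v‖`
  set c := ∑ i, v i ^ 2
  set u : Fin d → ℝ := (√c)⁻¹ • v
  have hu : ∑ i, u i ^ 2 = 1 := by
    simp only [u, Pi.smul_apply, smul_eq_mul, mul_pow, inv_pow, ← Finset.mul_sum,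
      Real.sq_sqrt hc.le]
    exact inv_mul_cancel₀ hc.ne'
  have hle : (⨅ w : {w : Fin d → ℝ // ∑ i, w i ^ 2 = 1}, ∑ j, vecMul w.1 M j ^ 2)
      ≤ ∑ j, vecMul u M j ^ 2 := by
    have hb : BddBelow (Set.range fun w : {w : Fin d → ℝ // ∑ i, w i ^ 2 = 1} =>
        ∑ j, vecMul w.1 M j ^ 2) := ⟨0, Set.forall_mem_range.2 fun w => hnonneg w.1⟩
    exact ciInf_le hb ⟨u, hu⟩
  have hu_sum : ∑ j, vecMul u M j ^ 2 = c⁻¹ * ∑ j, vecMul v M j ^ 2 := by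
    simp only [u, smul_vecMul, Pi.smul_apply, smul_eq_mul, mul_pow, inv_pow, ← Finset.mul_sum,
      Real.sq_sqrt hc.le]
  have hinf : 0 ≤ ⨅ w : {w : Fin d → ℝ // ∑ i, w i ^ 2 = 1}, ∑ j, vecMul w.1 M j ^ 2 :=
    Real.iInf_nonneg fun w => hnonneg w.1
  rw [sigma1, Real.sq_sqrt hinf, ← le_div_iff₀ hc, div_eq_inv_mul, ← hu_sum]
  exact hle

theorem sq_sigma1_mul_frobSq_le {m d n : ℕ} (A : Matrix (Fin m) (Fin d) ℝ)
    (M : Matrix (Fin d) (Fin n) ℝ) : sigma1 M ^ 2 * frobSq A ≤ frobSq (A * M) := by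
  rw [frobSq, Finset.mul_sum]
  exact Finset.sum_le_sum fun i _ => sq_sigma1_mul_sum_sq_le M (A i)

theorem le_div_of_mul_sq_le_mul {a b t : ℝ} (ha : 0 < a) (hb : 0 ≤ b) (h : a * t ^ 2 ≤ b * t) :
    t ≤ b / a := by
  rw [le_div_iff₀ ha]
  nlinarith

theorem sq_norm_sub_norm_le_sq_norm_sub {E : Type*} [SeminormedAddCommGroup E] (a b : E) :
    (‖a‖ - ‖b‖) ^ 2 ≤ ‖a - b‖ ^ 2 :=
  sq_le_sq.2 ((abs_norm_sub_norm_le a b).trans (abs_norm _).ge)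

theorem sq_norm_sub_norm_le_sq_norm_add {E : Type*} [SeminormedAddCommGroup E] (a b : E) :
    (‖a‖ - ‖b‖) ^ 2 ≤ ‖a + b‖ ^ 2 := by
  simpa using sq_norm_sub_norm_le_sq_norm_sub a (-b)

theorem sq_norm_le_of_sllJ_add_le {d n k : ℕ} {X : Matrix (Fin d) (Fin n) ℝ}
    {Y : Matrix (Fin (k + 1)) (Fin n) ℝ} {S : Matrix (Fin (k + 1)) (Fin (k + 1)) ℝ} {lam : ℝ}
    (hlam : 0 ≤ lam) {Z Δ : Matrix (Fin d) (Fin (k + 1)) ℝ}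
    (h : sllJ X Y S lam (Z + Δ) ≤ sllJ X Y S lam Z) :
    ‖Δᵀ * X‖ ^ 2 + lam * ‖Δ * (1 - S)‖ ^ 2
      ≤ 2 * (‖Y - Zᵀ * X‖ * ‖Δᵀ * X‖ + lam * (‖Z * (1 - S)‖ * ‖Δ * (1 - S)‖)) := by
  have hfit : Y - (Z + Δ)ᵀ * X = (Y - Zᵀ * X) - Δᵀ * X := by
    rw [transpose_add, Matrix.add_mul]; abel
  have hreg : ∀ W : Matrix (Fin d) (Fin (k + 1)) ℝ, W - W * S = W * (1 - S) := fun W => by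
    rw [Matrix.mul_sub, Matrix.mul_one]
  rw [sllJ, sllJ, hfit, hreg, hreg, Matrix.add_mul] at h
  simp only [frobSq_eq_norm_sq] at h
  have hfit_sq := sq_norm_sub_norm_le_sq_norm_sub (Y - Zᵀ * X) (Δᵀ * X)
  have hreg_sq := mul_le_mul_of_nonneg_left
    (sq_norm_sub_norm_le_sq_norm_add (Z * (1 - S)) (Δ * (1 - S))) hlam
  linarith

theorem stmt_10_general {d n k : ℕ} (X : Matrix (Fin d) (Fin n) ℝ)
    (Y : Matrix (Fin (k + 1)) (Fin n) ℝ) (S : Matrix (Fin (k + 1)) (Fin (k + 1)) ℝ)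
    (lam Om : ℝ) (hlam : 0 < lam)
    (hσ : 0 < sigma1 X)
    (hOm : ∀ i : Fin n, ∑ r, (X r i) ^ 2 ≤ Om)
    (What : Matrix (Fin d) (Fin k) ℝ) (what : Fin d → ℝ)
    -- `Z̃ = [Ŵ, ŵ]` is the concatenation of `Ŵ` with the column `ŵ`
    (Zt : Matrix (Fin d) (Fin (k + 1)) ℝ)
    (hZt : Zt = Matrix.of fun r => Fin.snoc (fun j => What r j) (what r))
    -- `Ẑ` is a minimizer of `J`
    (Zhat : Matrix (Fin d) (Fin (k + 1)) ℝ)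
    (hmin : ∀ Z, sllJ X Y S lam Zhat ≤ sllJ X Y S lam Z) :
    frob (Zhat - Zt)
      ≤ (2 / (lam * sigma1 (1 - S) ^ 2 + sigma1 X ^ 2)) *
        (Real.sqrt ((n : ℝ) * Om) * frob (Y - Ztᵀ * X)
          + lam * frob (1 - S) ^ 2 * Real.sqrt (frobSq What + ∑ i, (what i) ^ 2)) := by
  set Δ := Zhat - Zt
  have hZt_norm : √(frobSq What + ∑ i, what i ^ 2) = ‖Zt‖ := by
    rw [← frobSq_snoc, ← hZt, frobSq_eq_norm_sq, Real.sqrt_sq (norm_nonneg _)]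
  have hgap := sq_norm_le_of_sllJ_add_le hlam.le (Z := Zt) (Δ := Δ)
    (by simpa [Δ] using hmin Zt)
  have hlower : (lam * sigma1 (1 - S) ^ 2 + sigma1 X ^ 2) * ‖Δ‖ ^ 2
      ≤ ‖Δᵀ * X‖ ^ 2 + lam * ‖Δ * (1 - S)‖ ^ 2 := by
    have hX := sq_sigma1_mul_frobSq_le Δᵀ X
    have hS := mul_le_mul_of_nonneg_left (sq_sigma1_mul_frobSq_le Δ (1 - S)) hlam.le
    simp only [frobSq_eq_norm_sq, Matrix.frobenius_norm_transpose] at hX hS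
    linarith
  have hupper : 2 * (‖Y - Ztᵀ * X‖ * ‖Δᵀ * X‖ + lam * (‖Zt * (1 - S)‖ * ‖Δ * (1 - S)‖))
      ≤ 2 * (√(n * Om) * ‖Y - Ztᵀ * X‖ + lam * ‖1 - S‖ ^ 2 * ‖Zt‖) * ‖Δ‖ := by
    have hΔX : ‖Δᵀ * X‖ ≤ ‖Δ‖ * √(n * Om) := by
      grw [Matrix.frobenius_norm_mul, Matrix.frobenius_norm_transpose,
        norm_le_sqrt_mul_of_forall_col_sq_le X hOm]
    calc _ ≤ 2 * (‖Y - Ztᵀ * X‖ * (‖Δ‖ * √(n * Om))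
            + lam * ((‖Zt‖ * ‖1 - S‖) * (‖Δ‖ * ‖1 - S‖))) := by
          gcongr <;> exact Matrix.frobenius_norm_mul _ _
      _ = _ := by ring
  rw [frob_eq_norm, frob_eq_norm, frob_eq_norm, hZt_norm, div_mul_eq_mul_div]
  exact le_div_of_mul_sq_le_mul (by positivity) (by positivity) (hlower.trans (hgap.trans hupper))

/-- Streaming approximation error bound (Theorem 2). -/
theorem stmt_10 {d n k : ℕ} (X : Matrix (Fin d) (Fin n) ℝ)
    (Y : Matrix (Fin (k + 1)) (Fin n) ℝ) (S : Matrix (Fin (k + 1)) (Fin (k + 1)) ℝ)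
    (lam Om : ℝ) (hlam : 0 < lam)
    (hrank : X.rank = d) (hσ : 0 < sigma1 X)
    (hOm : ∀ i : Fin n, ∑ r, (X r i) ^ 2 ≤ Om)
    (What : Matrix (Fin d) (Fin k) ℝ) (what : Fin d → ℝ)
    -- `Z̃ = [Ŵ, ŵ]` is the concatenation of `Ŵ` with the column `ŵ`
    (Zt : Matrix (Fin d) (Fin (k + 1)) ℝ)
    (hZt : Zt = Matrix.of fun r => Fin.snoc (fun j => What r j) (what r))
    -- `Ẑ` is a minimizer of `J`
    (Zhat : Matrix (Fin d) (Fin (k + 1)) ℝ)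
    (hmin : ∀ Z, sllJ X Y S lam Zhat ≤ sllJ X Y S lam Z) :
    frob (Zhat - Zt)
      ≤ (2 / (lam * sigma1 (1 - S) ^ 2 + sigma1 X ^ 2)) *
        (Real.sqrt ((n : ℝ) * Om) * frob (Y - Ztᵀ * X)
          + lam * frob (1 - S) ^ 2 * Real.sqrt (frobSq What + ∑ i, (what i) ^ 2)) :=
  stmt_10_general X Y S lam Om hlam hσ hOm What what Zt hZt Zhat hmin
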